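/- arXiv:2308.09252 — 2 statements merged into one kernel-verified Lean document; each statement's English description precedes it below -/
import Mathlib

section
/- For bounded linear operators B and C on a complex Hilbert space H, w_e(B,C) ≤ (1/2)·‖B*B + C*C‖^{1/2} + (1/(2√2))·(w(B+C)² + w(B−C)²)^{1/2}. -/
open ContinuousLinearMap

noncomputable def nr {E : Type*} [NormedAddCommGroup E] [InnerProductSpace ℂ E]
    (T : E →L[ℂ] E) : ℝ :=
  sSup {r : ℝ | ∃ x : E, ‖x‖ = 1 ∧ r = ‖(inner ℂ (T x) x : ℂ)‖}

noncomputable def er {E : Type*} [NormedAddCommGroup E] [InnerProductSpace ℂ E]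
    (B C : E →L[ℂ] E) : ℝ :=
  sSup {r : ℝ | ∃ x : E, ‖x‖ = 1 ∧
    r = Real.sqrt (‖(inner ℂ (B x) x : ℂ)‖ ^ 2 + ‖(inner ℂ (C x) x : ℂ)‖ ^ 2)}

/-
Fix a unit vector x and put β = ⟨Bx,x⟩, γ = ⟨Cx,x⟩. Write √(|β|² + |γ|²) as half of itself plus
half of itself. By Cauchy–Schwarz, |β|² + |γ|² ≤ ‖Bx‖² + ‖Cx‖² = ⟨(B*B + C*C)x, x⟩ ≤ ‖B*B + C*C‖,
and by the parallelogram law 2(|β|² + |γ|²) = |β + γ|² + |β - γ|² ≤ w(B + C)² + w(B - C)².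
-/

open scoped InnerProductSpace

section InnerSelf

variable {𝕜 E : Type*} [RCLike 𝕜] [NormedAddCommGroup E] [InnerProductSpace 𝕜 E]

theorem norm_inner_apply_self_le_norm_apply {T : E →L[𝕜] E} {x : E} (hx : ‖x‖ = 1) :
    ‖⟪T x, x⟫_𝕜‖ ≤ ‖T x‖ := by
  simpa [hx] using norm_inner_le_norm (𝕜 := 𝕜) (T x) x

theorem norm_inner_apply_self_le_opNorm {T : E →L[𝕜] E} {x : E} (hx : ‖x‖ = 1) :
    ‖⟪T x, x⟫_𝕜‖ ≤ ‖T‖ :=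
  (norm_inner_apply_self_le_norm_apply hx).trans (by simpa [hx] using T.le_opNorm x)

theorem norm_apply_sq_add_norm_apply_sq_le [CompleteSpace E] (B C : E →L[𝕜] E) {x : E}
    (hx : ‖x‖ = 1) : ‖B x‖ ^ 2 + ‖C x‖ ^ 2 ≤ ‖adjoint B * B + adjoint C * C‖ := by
  calc ‖B x‖ ^ 2 + ‖C x‖ ^ 2 = RCLike.re ⟪(adjoint B * B + adjoint C * C) x, x⟫_𝕜 := by
        rw [apply_norm_sq_eq_inner_adjoint_left, apply_norm_sq_eq_inner_adjoint_left,
          add_apply, inner_add_left, map_add]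
        rfl
    _ ≤ ‖⟪(adjoint B * B + adjoint C * C) x, x⟫_𝕜‖ := RCLike.re_le_norm _
    _ ≤ _ := norm_inner_apply_self_le_opNorm hx

end InnerSelf

section NumericalRadius

variable {E : Type*} [NormedAddCommGroup E] [InnerProductSpace ℂ E]

theorem norm_inner_apply_self_le_nr (T : E →L[ℂ] E) {x : E} (hx : ‖x‖ = 1) :
    ‖⟪T x, x⟫_ℂ‖ ≤ nr T :=
  le_csSup ⟨‖T‖, by rintro r ⟨y, hy, rfl⟩; exact norm_inner_apply_self_le_opNorm hy⟩ ⟨x, hx, rfl⟩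

theorem two_mul_sq_add_sq_le_nr (B C : E →L[ℂ] E) {x : E} (hx : ‖x‖ = 1) :
    2 * (‖⟪B x, x⟫_ℂ‖ ^ 2 + ‖⟪C x, x⟫_ℂ‖ ^ 2) ≤ nr (B + C) ^ 2 + nr (B - C) ^ 2 := by
  have hadd := norm_inner_apply_self_le_nr (B + C) hx
  have hsub := norm_inner_apply_self_le_nr (B - C) hx
  rw [add_apply, inner_add_left] at hadd
  rw [sub_apply, inner_sub_left] at hsub
  rw [← parallelogram_law_with_norm ℝ]
  gcongr

end NumericalRadius

theorem Real.sqrt_le_half_sqrt_add_of_le {q a n : ℝ} (ha : q ≤ a) (hn : 2 * q ≤ n) :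
    √q ≤ 1 / 2 * √a + 1 / (2 * √2) * √n := by
  have h2 : (0 : ℝ) < √2 := by positivity
  have hqa : √q ≤ √a := Real.sqrt_le_sqrt ha
  have hqn : √2 * √q ≤ √n := by
    rw [← Real.sqrt_mul zero_le_two]
    exact Real.sqrt_le_sqrt hn
  have : √q / 2 ≤ 1 / (2 * √2) * √n := by
    rw [div_mul_eq_mul_div, one_mul, le_div_iff₀ (by positivity)]
    linarith
  linarith

theorem stmt_9 {H : Type*} [NormedAddCommGroup H] [InnerProductSpace ℂ H] [CompleteSpace H]
    (B C : H →L[ℂ] H) :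
    er B C ≤ (1 / 2) * ‖adjoint B * B + adjoint C * C‖ ^ ((1 : ℝ) / 2)
      + (1 / (2 * Real.sqrt 2)) * (nr (B + C) ^ 2 + nr (B - C) ^ 2) ^ ((1 : ℝ) / 2) := by
  rw [← Real.sqrt_eq_rpow, ← Real.sqrt_eq_rpow]
  refine Real.sSup_le ?_ (by positivity)
  rintro r ⟨x, hx, rfl⟩
  refine Real.sqrt_le_half_sqrt_add_of_le ?_ (two_mul_sq_add_sq_le_nr B C hx)
  calc ‖⟪B x, x⟫_ℂ‖ ^ 2 + ‖⟪C x, x⟫_ℂ‖ ^ 2 ≤ ‖B x‖ ^ 2 + ‖C x‖ ^ 2 := by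
        gcongr <;> exact norm_inner_apply_self_le_norm_apply hx
    _ ≤ _ := norm_apply_sq_add_norm_apply_sq_le B C hx
end

section
/- For a bounded linear operator T on a complex Hilbert space H, w(T) ≥ (1/4)·‖T‖ + (1/4)·(‖Re(T)‖ + ‖Im(T)‖) + (1/2)·|‖Re(T)‖ − ‖Im(T)‖|. -/
open ContinuousLinearMap

/-!
Write `a = ‖Re T‖` and `b = ‖Im T‖`. Since `T = Re T + i Im T`, we have `‖T‖ ≤ a + b`, so the
right-hand side is at most `(a + b) / 2 + |a - b| / 2 = max a b`. Both parts are self-adjoint, so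
their norms are the suprema of `|⟨Re T x, x⟩| = |re ⟨T x, x⟩|` and `|⟨Im T x, x⟩| = |im ⟨T x, x⟩|`
over unit vectors, and these are bounded by `w(T)`.
-/

open scoped ComplexStarModule

section NumericalRadius

variable {E : Type*} [NormedAddCommGroup E] [InnerProductSpace ℂ E]

theorem nr_nonneg (T : E →L[ℂ] E) : 0 ≤ nr T :=
  Real.sSup_nonneg fun _ ⟨_, _, hr⟩ => hr ▸ norm_nonneg _

theorem norm_inner_le_nr (T : E →L[ℂ] E) {x : E} (hx : ‖x‖ = 1) :
    ‖inner ℂ (T x) x‖ ≤ nr T := by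
  refine le_csSup ⟨‖T‖, ?_⟩ ⟨x, hx, rfl⟩
  rintro _ ⟨y, hy, rfl⟩
  simpa [hy] using (norm_inner_le_norm (T y) y).trans (by simpa [hy] using T.le_opNorm y)

theorem norm_inner_le_nr_mul_sq (T : E →L[ℂ] E) (x : E) :
    ‖inner ℂ (T x) x‖ ≤ nr T * ‖x‖ ^ 2 := by
  rcases eq_or_ne x 0 with rfl | hx
  · simp
  set u : E := (‖x‖⁻¹ : ℂ) • x
  have hu : ‖u‖ = 1 := norm_smul_inv_norm hx
  have hxu : x = (‖x‖ : ℂ) • u := by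
    simp [u, smul_smul, norm_ne_zero_iff.2 hx]
  rw [hxu]
  simpa [inner_smul_left, inner_smul_right, norm_smul, hu, mul_comm, mul_assoc, sq] using
    mul_le_mul_of_nonneg_left (norm_inner_le_nr T hu) (sq_nonneg ‖x‖)

theorem IsSelfAdjoint.norm_le_nr [CompleteSpace E] {S : E →L[ℂ] E} (hS : IsSelfAdjoint S)
    (T : E →L[ℂ] E) (h : ∀ x, |(inner ℂ (S x) x).re| ≤ ‖inner ℂ (T x) x‖) : ‖S‖ ≤ nr T := by
  rw [norm_eq_iSup_rayleighQuotient S hS.isSymmetric]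
  refine ciSup_le fun x => ?_
  rw [rayleighQuotient, reApplyInnerSelf_apply, abs_div, abs_sq]
  rcases eq_or_ne x 0 with rfl | hx
  · simpa using nr_nonneg T
  rw [div_le_iff₀ (by positivity)]
  exact (h x).trans (norm_inner_le_nr_mul_sq T x)

end NumericalRadius

section CartesianDecomposition

variable {E : Type*} [NormedAddCommGroup E] [InnerProductSpace ℂ E] [CompleteSpace E]

theorem IsSelfAdjoint.im_inner_apply_self {S : E →L[ℂ] E} (hS : IsSelfAdjoint S) (x : E) :
    (inner ℂ (S x) x).im = 0 :=
  hS.isSymmetric.im_inner_apply_self x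

theorem two_inv_smul_add_adjoint (T : E →L[ℂ] E) :
    (2 : ℂ)⁻¹ • (T + adjoint T) = ℜ T := by
  rw [realPart_apply_coe, star_eq_adjoint, ← Complex.coe_smul]
  norm_num

theorem two_mul_I_inv_smul_sub_adjoint (T : E →L[ℂ] E) :
    (2 * Complex.I)⁻¹ • (T - adjoint T) = ℑ T := by
  rw [imaginaryPart_apply_coe, star_eq_adjoint, ← Complex.coe_smul, smul_smul]
  congr 1
  field_simp
  simp

theorem re_inner_realPart_apply (T : E →L[ℂ] E) (x : E) :
    (inner ℂ ((ℜ T : E →L[ℂ] E) x) x).re = (inner ℂ (T x) x).re := by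
  conv_rhs => rw [← realPart_add_I_smul_imaginaryPart T]
  simp [(ℑ T).prop.im_inner_apply_self]

-- The inner product is conjugate-linear in its first argument, hence the sign.
theorem re_inner_imaginaryPart_apply (T : E →L[ℂ] E) (x : E) :
    (inner ℂ ((ℑ T : E →L[ℂ] E) x) x).re = -(inner ℂ (T x) x).im := by
  conv_rhs => rw [← realPart_add_I_smul_imaginaryPart T]
  simp [(ℜ T).prop.im_inner_apply_self]

theorem norm_realPart_le_nr (T : E →L[ℂ] E) : ‖(ℜ T : E →L[ℂ] E)‖ ≤ nr T :=
  (ℜ T).prop.norm_le_nr T fun x => re_inner_realPart_apply T x ▸ Complex.abs_re_le_norm _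

theorem norm_imaginaryPart_le_nr (T : E →L[ℂ] E) : ‖(ℑ T : E →L[ℂ] E)‖ ≤ nr T :=
  (ℑ T).prop.norm_le_nr T fun x => by
    rw [re_inner_imaginaryPart_apply, abs_neg]
    exact Complex.abs_im_le_norm _

theorem norm_le_norm_realPart_add_norm_imaginaryPart (T : E →L[ℂ] E) :
    ‖T‖ ≤ ‖(ℜ T : E →L[ℂ] E)‖ + ‖(ℑ T : E →L[ℂ] E)‖ := by
  conv_lhs => rw [← realPart_add_I_smul_imaginaryPart T]
  simpa [norm_smul] using norm_add_le (ℜ T : E →L[ℂ] E) (Complex.I • (ℑ T : E →L[ℂ] E))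

end CartesianDecomposition

theorem stmt_15 {H : Type*} [NormedAddCommGroup H] [InnerProductSpace ℂ H] [CompleteSpace H]
    (T : H →L[ℂ] H) :
    nr T ≥ (1 / 4) * ‖T‖
      + (1 / 4) * (‖(2 : ℂ)⁻¹ • (T + adjoint T)‖ + ‖(2 * Complex.I)⁻¹ • (T - adjoint T)‖)
      + (1 / 2) * |‖(2 : ℂ)⁻¹ • (T + adjoint T)‖ - ‖(2 * Complex.I)⁻¹ • (T - adjoint T)‖| := by
  rw [two_inv_smul_add_adjoint, two_mul_I_inv_smul_sub_adjoint]
  have hT := norm_le_norm_realPart_add_norm_imaginaryPart T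
  have hRe := norm_realPart_le_nr T
  have hIm := norm_imaginaryPart_le_nr T
  rcases abs_cases (‖(ℜ T : H →L[ℂ] H)‖ - ‖(ℑ T : H →L[ℂ] H)‖) with ⟨h, -⟩ | ⟨h, -⟩ <;>
    rw [h] <;> linarith
end
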